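/- arXiv:cs/0507034 — 2 statements merged into one kernel-verified Lean document; each statement's English description precedes it below -/
import Mathlib

section
/- In the network B_clockwise(κ,m), the average over all ordered pairs (s,t) of nodes of the length of a greedy route with respect to δ_clockwise from s to t is less than 2m−1. -/
/-- The clockwise distance `(v - u) mod n` between two nodes on a ring of `n` nodes. -/
def clockDelta (n : ℕ) (u v : Fin n) : ℕ := ((v : ℕ) + n - (u : ℕ)) % n

/-- The level `ℓ(u) = (m-1) - (u mod m)` of a node. -/
def clockLevel (m : ℕ) {n : ℕ} (u : Fin n) : ℕ := (m - 1) - ((u : ℕ) % m)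

/-- The directed edges of the Papillon network `B_clockwise(κ, m)` on `n = κ^m * m` nodes:
`u` links to `(u + x) mod n` for `x ∈ {1 + i·m·κ^{ℓ(u)} : 0 ≤ i < κ}`. -/
def clockEdge (κ m : ℕ) (u v : Fin (κ ^ m * m)) : Prop :=
  ∃ i < κ, (v : ℕ) = ((u : ℕ) + (1 + i * m * κ ^ clockLevel m u)) % (κ ^ m * m)

/-- `v` is a greedy next hop from `u` towards target `t` with respect to `δ_clockwise`:
`v` is a neighbor of `u` minimizing the clockwise distance to `t` among `u`'s neighbors. -/
def clockGreedyStep (κ m : ℕ) (t u v : Fin (κ ^ m * m)) : Prop :=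
  clockEdge κ m u v ∧ ∀ v', clockEdge κ m u v' →
    clockDelta (κ ^ m * m) v t ≤ clockDelta (κ ^ m * m) v' t

/-!
Each greedy hop advances the node by one modulo `m` (since `m ∣ n`) and lowers the clockwise
distance to the target by one modulo `m`. A hop from a node of level `ℓ` whose distance is below
`m κ^(ℓ+1)` can jump by `1 + q m κ^ℓ` for a suitable `q < κ`, leaving a distance below `m κ^ℓ`.
A node of residue `0` has level `m - 1` and distance below `n = m κ^m`, so `m` hops after it the
distance is below `m`; from then on every hop lowers it by exactly one, and the remaining
distance is `t mod m`. Thus a route from `s` has at most `(-s mod m) + m + (t mod m)` hops, and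
these bounds average to exactly `2m - 1` over all pairs; the pairs `s = t` make it strict.
-/

open Finset

lemma ZMod.eq_of_natCast_eq_of_lt {n a b : ℕ} (ha : a < n) (hb : b < n)
    (h : (a : ZMod n) = b) : a = b := by
  rw [← ZMod.val_natCast_of_lt ha, ← ZMod.val_natCast_of_lt hb, h]

lemma ZMod.natCast_mod_of_dvd {k n : ℕ} (hk : k ∣ n) (a : ℕ) :
    ((a % n : ℕ) : ZMod k) = a := by
  rw [← ZMod.natCast_mod, Nat.mod_mod_of_dvd a hk, ZMod.natCast_mod]

section ClockDelta

variable {n : ℕ}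

lemma clockDelta_lt (u v : Fin n) : clockDelta n u v < n :=
  Nat.mod_lt _ u.pos

lemma natCast_clockDelta {k : ℕ} (hk : k ∣ n) (u v : Fin n) :
    (clockDelta n u v : ZMod k) = (v : ℕ) - (u : ℕ) := by
  have hn : (n : ZMod k) = 0 := (ZMod.natCast_eq_zero_iff n k).2 hk
  rw [clockDelta, ZMod.natCast_mod_of_dvd hk, Nat.cast_sub (by omega), Nat.cast_add, hn,
    add_zero]

lemma clockDelta_eq_zero_iff {u v : Fin n} : clockDelta n u v = 0 ↔ u = v := by
  rw [← Fin.val_inj]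
  constructor
  · intro h
    have := natCast_clockDelta (dvd_refl n) u v
    rw [h, Nat.cast_zero, eq_comm, sub_eq_zero] at this
    exact ZMod.eq_of_natCast_eq_of_lt u.isLt v.isLt this.symm
  · intro h
    rw [clockDelta, h, Nat.add_sub_cancel_left, Nat.mod_self]

lemma clockDelta_self (u : Fin n) : clockDelta n u u = 0 :=
  clockDelta_eq_zero_iff.2 rfl

lemma clockDelta_of_val_eq_add_mod {u v t : Fin n} {x : ℕ} (hv : (v : ℕ) = ((u : ℕ) + x) % n)
    (hx : x ≤ clockDelta n u t) : clockDelta n v t = clockDelta n u t - x := by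
  refine ZMod.eq_of_natCast_eq_of_lt (clockDelta_lt v t) (by have := clockDelta_lt u t; omega) ?_
  rw [natCast_clockDelta (dvd_refl n), Nat.cast_sub hx, natCast_clockDelta (dvd_refl n), hv,
    ZMod.natCast_mod, Nat.cast_add]
  ring

end ClockDelta

lemma Nat.exists_lt_sub_one_add_mul_lt {d κ B : ℕ} (hd : 0 < d) (hdB : d < κ * B) :
    ∃ q < κ, 1 + q * B ≤ d ∧ d - (1 + q * B) < B := by
  have hB : 0 < B := Nat.pos_of_mul_pos_left (a := κ) (by omega)
  refine ⟨(d - 1) / B, (Nat.div_lt_iff_lt_mul hB).2 (by omega), ?_⟩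
  have := Nat.div_add_mod' (d - 1) B
  have := Nat.mod_lt (d - 1) hB
  omega

section Papillon

variable {κ m : ℕ}

lemma clockEdge.natCast_val {u v : Fin (κ ^ m * m)} (h : clockEdge κ m u v) :
    ((v : ℕ) : ZMod m) = (u : ℕ) + 1 := by
  obtain ⟨i, -, hv⟩ := h
  rw [hv, ZMod.natCast_mod_of_dvd (Dvd.intro_left _ rfl)]
  push_cast
  rw [ZMod.natCast_self]
  ring

lemma clockEdge.clockLevel_eq {u v : Fin (κ ^ m * m)} {k : ℕ} (h : clockEdge κ m u v)
    (hu : clockLevel m u = k + 1) : clockLevel m v = k := by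
  have hvu : (v : ℕ) % m = ((u : ℕ) % m + 1) % m := by
    rw [← ZMod.natCast_eq_natCast_iff', h.natCast_val, Nat.cast_add, ZMod.natCast_mod,
      Nat.cast_one]
  unfold clockLevel at hu ⊢
  rw [hvu, Nat.mod_eq_of_lt (by omega)]
  omega

lemma clockGreedyStep.clockDelta_le_sub {t u v : Fin (κ ^ m * m)}
    (h : clockGreedyStep κ m t u v) {q : ℕ} (hq : q < κ)
    (hx : 1 + q * (m * κ ^ clockLevel m u) ≤ clockDelta _ u t) :
    clockDelta _ v t ≤ clockDelta _ u t - (1 + q * (m * κ ^ clockLevel m u)) := by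
  let v' : Fin (κ ^ m * m) :=
    ⟨((u : ℕ) + (1 + q * (m * κ ^ clockLevel m u))) % (κ ^ m * m), Nat.mod_lt _ u.pos⟩
  rw [← clockDelta_of_val_eq_add_mod (v := v') rfl hx]
  exact h.2 v' ⟨q, hq, by rw [mul_assoc]⟩

lemma clockGreedyStep.natCast_clockDelta {t u v : Fin (κ ^ m * m)}
    (h : clockGreedyStep κ m t u v) :
    (clockDelta _ v t : ZMod m) = clockDelta _ u t - 1 := by
  have hm : m ∣ κ ^ m * m := Dvd.intro_left _ rfl
  rw [_root_.natCast_clockDelta hm, _root_.natCast_clockDelta hm, h.1.natCast_val]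
  ring

lemma clockGreedyStep.clockDelta_lt_of_lt {t u v : Fin (κ ^ m * m)}
    (h : clockGreedyStep κ m t u v) (hut : u ≠ t)
    (hd : clockDelta _ u t < m * κ ^ (clockLevel m u + 1)) :
    clockDelta _ v t < m * κ ^ clockLevel m u := by
  have hd0 : 0 < clockDelta _ u t := Nat.pos_of_ne_zero (mt clockDelta_eq_zero_iff.1 hut)
  obtain ⟨q, hq, hx, hlt⟩ :=
    Nat.exists_lt_sub_one_add_mul_lt (κ := κ) (B := m * κ ^ clockLevel m u) hd0
      (hd.trans_eq (by ring))
  exact (h.clockDelta_le_sub hq hx).trans_lt hlt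

lemma clockGreedyStep.clockDelta_eq_sub_one {t u v : Fin (κ ^ m * m)}
    (h : clockGreedyStep κ m t u v) (hut : u ≠ t) (hd : clockDelta _ u t ≤ m) :
    clockDelta _ v t = clockDelta _ u t - 1 := by
  obtain ⟨i, hi, -⟩ := h.1
  have hd0 : clockDelta _ u t ≠ 0 := mt clockDelta_eq_zero_iff.1 hut
  have hle := h.clockDelta_le_sub (q := 0) (Nat.zero_lt_of_lt hi) (by omega)
  refine ZMod.eq_of_natCast_eq_of_lt (n := m) (by omega) (by omega) ?_
  rw [h.natCast_clockDelta, Nat.cast_sub (by omega), Nat.cast_one]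

end Papillon

structure IsGreedyRoute (κ m : ℕ) (s t : Fin (κ ^ m * m)) (r : ℕ → Fin (κ ^ m * m)) (T : ℕ) :
    Prop where
  start : r 0 = s
  arrive : r T = t
  ne_target : ∀ j < T, r j ≠ t
  step : ∀ j < T, clockGreedyStep κ m t (r j) (r (j + 1))

namespace IsGreedyRoute

variable {κ m T : ℕ} {s t : Fin (κ ^ m * m)} {r : ℕ → Fin (κ ^ m * m)}

lemma natCast_val (hr : IsGreedyRoute κ m s t r T) {j : ℕ} (hj : j ≤ T) :
    ((r j : ℕ) : ZMod m) = (s : ℕ) + j := by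
  induction j with
  | zero => rw [hr.start, Nat.cast_zero, add_zero]
  | succ j ih =>
    rw [(hr.step j hj).1.natCast_val, ih (by omega)]
    push_cast
    ring

lemma eq_add_clockDelta (hr : IsGreedyRoute κ m s t r T) {j : ℕ} (hj : j ≤ T)
    (hd : clockDelta _ (r j) t ≤ m) : T = j + clockDelta _ (r j) t := by
  induction h : clockDelta _ (r j) t generalizing j with
  | zero =>
    have : ¬ j < T := fun hjT => hr.ne_target j hjT (clockDelta_eq_zero_iff.1 h)
    omega
  | succ e ih =>
    have hjT : j < T :=
      lt_of_le_of_ne hj (by rintro rfl; rw [hr.arrive, clockDelta_self] at h; omega)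
    have hnext := (hr.step j hjT).clockDelta_eq_sub_one (hr.ne_target j hjT) hd
    rw [h, Nat.add_sub_cancel] at hnext
    have := ih (j := j + 1) hjT (by rw [hnext]; omega) hnext
    omega

lemma len_eq_zero (hr : IsGreedyRoute κ m t t r T) : T = 0 := by
  have hδ : clockDelta _ (r 0) t = 0 := by rw [hr.start, clockDelta_self]
  simpa [hδ] using hr.eq_add_clockDelta (Nat.zero_le T) (hδ.trans_le (Nat.zero_le m))

lemma clockDelta_min_lt (hr : IsGreedyRoute κ m s t r T) {ℓ j : ℕ} (hj : j ≤ T)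
    (hℓ : clockLevel m (r j) = ℓ) (hd : clockDelta _ (r j) t < m * κ ^ (ℓ + 1)) :
    clockDelta _ (r (min (j + ℓ + 1) T)) t < m := by
  have harrive : ∀ ℓ, clockDelta _ (r (min (T + ℓ + 1) T)) t < m := fun ℓ => by
    rw [min_eq_right (by omega), hr.arrive, clockDelta_self]
    exact Nat.pos_of_mul_pos_left s.pos
  induction ℓ generalizing j with
  | zero =>
    rcases hj.lt_or_eq with hjT | rfl
    · rw [min_eq_left (by omega)]
      simpa [hℓ] using (hr.step j hjT).clockDelta_lt_of_lt (hr.ne_target j hjT) (hℓ ▸ hd)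
    · exact harrive 0
  | succ k ih =>
    rcases hj.lt_or_eq with hjT | rfl
    · have hnext := (hr.step j hjT).clockDelta_lt_of_lt (hr.ne_target j hjT) (hℓ ▸ hd)
      rw [hℓ] at hnext
      have := ih (j := j + 1) hjT ((hr.step j hjT).1.clockLevel_eq hℓ) hnext
      rwa [show j + 1 + k + 1 = j + (k + 1) + 1 by omega] at this
    · exact harrive (k + 1)

lemma len_le (hr : IsGreedyRoute κ m s t r T) : T ≤ (m - s % m) % m + m + t % m := by
  have hm : 0 < m := Nat.pos_of_mul_pos_left s.pos
  set j₀ := (m - s % m) % m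
  have hj₀ : ((s : ℕ) : ZMod m) + j₀ = 0 := by
    rw [ZMod.natCast_mod, Nat.cast_sub (Nat.mod_lt _ hm).le, ZMod.natCast_self, ZMod.natCast_mod]
    ring
  rcases le_or_gt T j₀ with hT | hT
  · omega
  have hlevel : clockLevel m (r j₀) = m - 1 := by
    have h0 : (r j₀ : ℕ) % m = 0 := Nat.mod_eq_zero_of_dvd <|
      (ZMod.natCast_eq_zero_iff _ _).1 (by rw [hr.natCast_val hT.le, hj₀])
    rw [clockLevel, h0, Nat.sub_zero]
  have hd : clockDelta _ (r j₀) t < m * κ ^ (m - 1 + 1) := by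
    rw [Nat.sub_add_cancel hm]
    exact (clockDelta_lt _ _).trans_eq (mul_comm _ _)
  have hC := hr.clockDelta_min_lt hT.le hlevel hd
  rw [add_assoc, Nat.sub_add_cancel hm] at hC
  have hlen := hr.eq_add_clockDelta (min_le_right _ T) hC.le
  rcases le_or_gt T (j₀ + m) with hT' | hT'
  · omega
  rw [min_eq_left hT'.le] at hC hlen
  suffices clockDelta _ (r (j₀ + m)) t = t % m by omega
  refine ZMod.eq_of_natCast_eq_of_lt hC (Nat.mod_lt _ hm) ?_
  rw [natCast_clockDelta (Dvd.intro_left _ rfl), hr.natCast_val hT'.le, ZMod.natCast_mod,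
    Nat.cast_add, ← add_assoc, hj₀, ZMod.natCast_self]
  ring

end IsGreedyRoute

lemma Finset.sum_range_mul_mod {M : Type*} [AddCommMonoid M] (f : ℕ → M) (a m : ℕ) :
    ∑ x ∈ range (a * m), f (x % m) = a • ∑ x ∈ range m, f x := by
  induction a with
  | zero => simp
  | succ a ih =>
    rw [Nat.succ_mul, sum_range_add, ih, succ_nsmul]
    congr 1
    refine sum_congr rfl fun x hx => ?_
    rw [add_comm, Nat.add_mul_mod_self_right, Nat.mod_eq_of_lt (mem_range.1 hx)]

lemma sum_range_sub_mod_add (m : ℕ) : ∑ r ∈ range m, ((m - r) % m + r) = m * (m - 1) := by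
  cases m with
  | zero => simp
  | succ m =>
    have hterm : ∀ r ∈ range m, (m + 1 - (r + 1)) % (m + 1) + (r + 1) = m + 1 := fun r hr => by
      rw [Nat.mod_eq_of_lt (by omega)]
      have := mem_range.1 hr
      omega
    rw [sum_range_succ', Nat.sub_zero, Nat.mod_self, zero_add, add_zero, sum_congr rfl hterm]
    simp [mul_comm]

lemma sum_sum_sub_mod_add_mod (a m : ℕ) :
    ∑ s : Fin (a * m), ∑ t : Fin (a * m), ((m - s % m) % m + m + t % m) =
      (2 * m - 1) * (a * m) ^ 2 := by
  have hper : ∑ s : Fin (a * m), ((m - s % m) % m + s % m) = a * (m * (m - 1)) := by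
    rw [Fin.sum_univ_eq_sum_range (fun x => (m - x % m) % m + x % m),
      sum_range_mul_mod (fun r => (m - r) % m + r), sum_range_sub_mod_add, smul_eq_mul]
  rw [sum_add_distrib] at hper
  simp only [sum_add_distrib, sum_const, card_univ, Fintype.card_fin, smul_eq_mul, ← mul_sum]
  rcases m with _ | m
  · simp
  rw [Nat.add_sub_cancel] at hper
  rw [show 2 * (m + 1) - 1 = 2 * m + 1 by omega]
  linear_combination (a * (m + 1)) * hper

/-- In `B_clockwise(κ, m)`, the average over all ordered pairs `(s, t)` of the length of a
greedy route (w.r.t. `δ_clockwise`) from `s` to `t` is less than `2m - 1`.  Here `w s t` is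
an arbitrary greedy route from `s` to `t` (ties broken arbitrarily) and `len s t` is its
number of hops, i.e. the first index at which it hits `t`. -/
theorem clockwise_greedy_average (κ m : ℕ) (hκ : 1 ≤ κ) (hm : 1 ≤ m)
    (w : Fin (κ ^ m * m) → Fin (κ ^ m * m) → ℕ → Fin (κ ^ m * m))
    (len : Fin (κ ^ m * m) → Fin (κ ^ m * m) → ℕ)
    (h0 : ∀ s t, w s t 0 = s)
    (hend : ∀ s t, w s t (len s t) = t)
    (hne : ∀ s t, ∀ j < len s t, w s t j ≠ t)
    (hstep : ∀ s t, ∀ j < len s t, clockGreedyStep κ m t (w s t j) (w s t (j + 1))) :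
    (∑ s : Fin (κ ^ m * m), ∑ t : Fin (κ ^ m * m), (len s t : ℝ)) /
      ((κ ^ m * m : ℕ) : ℝ) ^ 2 < 2 * m - 1 := by
  have hroute s t : IsGreedyRoute κ m s t (w s t) (len s t) :=
    ⟨h0 s t, hend s t, hne s t, hstep s t⟩
  have : Nonempty (Fin (κ ^ m * m)) := ⟨⟨0, Nat.mul_pos (Nat.pow_pos hκ) hm⟩⟩
  have htotal : ∑ s, ∑ t, len s t < (2 * m - 1) * (κ ^ m * m) ^ 2 := by
    rw [← sum_sum_sub_mod_add_mod]
    refine sum_lt_sum_of_nonempty univ_nonempty fun s _ =>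
      sum_lt_sum (fun t _ => (hroute s t).len_le) ⟨s, mem_univ s, ?_⟩
    rw [(hroute s s).len_eq_zero]
    omega
  have h2m : ((2 * m - 1 : ℕ) : ℝ) = 2 * m - 1 := by
    push_cast [Nat.cast_sub (by omega : 1 ≤ 2 * m)]
    rfl
  rw [div_lt_iff₀ (by positivity), ← h2m]
  exact_mod_cast htotal
end

section
/- In the network B_absolute(k,m), the average over all ordered pairs (s,t) of nodes of the length of the shortest directed path from s to t is at most 1.5m. -/
/-!
From a node of residue `r` modulo `m`, a forward hop advances the residue by one and adds
`i · m · (2k+1)^ℓ` with `|i| ≤ k`, where the level `ℓ = m - 1 - r` only depends on the residue.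
Over `m` consecutive hops the levels run through `0, …, m - 1` once each, so by balanced
base-`(2k+1)` digits these `m` hops can add `m + m·c` for any integer `c` (modulo `n`). Hence `t`
is reached from `s` by `(t - s) mod m` hops with `i = 0` followed by one such sweep, and averaging
`(t - s) mod m` over `t` gives `(m - 1)/2`, so the mean distance is at most `m + (m - 1)/2`.
The back edges are never needed.
-/

/-- Number of nodes of the Papillon network `B_absolute(k, m)`. -/
def absN (k m : ℕ) : ℕ := (2 * k + 1) ^ m * m

/-- The absolute distance `min((v - u) mod n, (u - v) mod n)` on a ring of `n` nodes. -/
def absDelta (n : ℕ) (u v : Fin n) : ℕ :=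
  min (((v : ℕ) + n - (u : ℕ)) % n) (((u : ℕ) + n - (v : ℕ)) % n)

/-- The level `ℓ(u) = (m-1) - (u mod m)` of a node. -/
def absLevel (m : ℕ) {n : ℕ} (u : Fin n) : ℕ := (m - 1) - ((u : ℕ) % m)

/-- The `2k+1` "forward" links of `B_absolute(k, m)`: `u` links to `(u + x) mod n` for
`x ∈ {1 + i·m·(2k+1)^{ℓ(u)} : -k ≤ i ≤ k}`. -/
def absForwardEdge (k m : ℕ) (u v : Fin (absN k m)) : Prop :=
  ∃ i : ℤ, -(k : ℤ) ≤ i ∧ i ≤ (k : ℤ) ∧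
    ((v : ℕ) : ℤ) =
      (((u : ℕ) : ℤ) + (1 + i * (m : ℤ) * ((2 * (k : ℤ) + 1)) ^ absLevel m u)) %
        ((absN k m : ℕ) : ℤ)

/-- The "back edge" of `B_absolute(k, m)`: `u` links to `(u + x) mod n` for `x = -m + 1`. -/
def absBackEdge (k m : ℕ) (u v : Fin (absN k m)) : Prop :=
  ((v : ℕ) : ℤ) = (((u : ℕ) : ℤ) + (1 - (m : ℤ))) % ((absN k m : ℕ) : ℤ)

/-- The directed edges of `B_absolute(k, m)`. -/
def absEdge (k m : ℕ) (u v : Fin (absN k m)) : Prop :=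
  absForwardEdge k m u v ∨ absBackEdge k m u v

/-- `v` is a greedy next hop from `u` towards target `t` with respect to `δ_absolute`:
`v` is a neighbor of `u` minimizing the absolute distance to `t` among `u`'s neighbors. -/
def absGreedyStep (k m : ℕ) (t u v : Fin (absN k m)) : Prop :=
  absEdge k m u v ∧ ∀ v', absEdge k m u v' →
    absDelta (absN k m) v t ≤ absDelta (absN k m) v' t

open Finset

def HasWalkOfLength {α : Type*} (r : α → α → Prop) (a b : α) (L : ℕ) : Prop :=
  ∃ w : ℕ → α, w 0 = a ∧ w L = b ∧ ∀ j < L, r (w j) (w (j + 1))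

namespace HasWalkOfLength

variable {α : Type*} {r : α → α → Prop} {a b c : α} {L L' : ℕ}

theorem refl (r : α → α → Prop) (a : α) : HasWalkOfLength r a a 0 :=
  ⟨fun _ => a, rfl, rfl, fun _ h => absurd h (Nat.not_lt_zero _)⟩

theorem single (h : r a b) : HasWalkOfLength r a b 1 :=
  ⟨fun j => if j = 0 then a else b, rfl, rfl, fun j hj => by
    obtain rfl : j = 0 := by omega
    exact h⟩

theorem trans (h₁ : HasWalkOfLength r a b L) (h₂ : HasWalkOfLength r b c L') :
    HasWalkOfLength r a c (L + L') := by
  obtain ⟨w₁, h₁0, h₁L, h₁r⟩ := h₁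
  obtain ⟨w₂, h₂0, h₂L, h₂r⟩ := h₂
  refine ⟨fun j => if j ≤ L then w₁ j else w₂ (j - L), by simpa using h₁0, ?_, fun j hj => ?_⟩
  · rcases L'.eq_zero_or_pos with rfl | hL'
    · simpa [h₁L] using h₂0.symm.trans h₂L
    · simpa [show ¬ L + L' ≤ L by omega] using h₂L
  · rcases lt_or_ge j L with hjL | hjL
    · by_cases hj1 : j + 1 ≤ L
      · simpa [hjL.le, hj1] using h₁r j hjL
      · obtain rfl : L = j + 1 := by omega
        simpa [h₂0, ← h₁L] using h₁r j hjL
    · rcases hjL.eq_or_lt with rfl | hjL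
      · simpa [h₁L, ← h₂0] using h₂r 0 (by omega)
      · simpa [show ¬ j ≤ L by omega, show ¬ j + 1 ≤ L by omega,
          show j + 1 - L = j - L + 1 by omega] using h₂r (j - L) (by omega)

end HasWalkOfLength

namespace Function.Periodic

variable {M : Type*} [AddCancelCommMonoid M] {g : ℕ → M} {m : ℕ}

theorem sum_range_shift (hg : Periodic g m) (a : ℕ) :
    ∑ t ∈ range m, g (a + t) = ∑ t ∈ range m, g t := by
  induction a with
  | zero => simp
  | succ a ih =>
    have h := sum_range_succ' (fun t => g (a + t)) m
    rw [sum_range_succ, add_zero, ← hg a, add_left_inj] at h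
    exact (sum_congr rfl fun t _ => congrArg g (by omega)).trans (h.symm.trans ih)

theorem sum_range_mul (hg : Periodic g m) (q : ℕ) :
    ∑ t ∈ range (q * m), g t = q • ∑ t ∈ range m, g t := by
  induction q with
  | zero => simp
  | succ q ih =>
    rw [Nat.succ_mul, Finset.sum_range_add, ih, succ_nsmul]
    congr 1
    exact sum_congr rfl fun t _ => by simpa [add_comm] using hg.nat_mul q t

end Function.Periodic

theorem exists_balanced_residue (k : ℕ) (c : ℤ) :
    ∃ r q : ℤ, |r| ≤ k ∧ c = r + (2 * k + 1) * q := by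
  have hB : (0 : ℤ) < 2 * k + 1 := by positivity
  refine ⟨(c + k) % (2 * k + 1) - k, (c + k) / (2 * k + 1), abs_le.mpr ⟨?_, ?_⟩, ?_⟩
  · linarith [Int.emod_nonneg (c + k) hB.ne']
  · linarith [Int.emod_lt_of_pos (c + k) hB]
  · linarith [Int.emod_add_mul_ediv (c + k) (2 * k + 1)]

theorem exists_balanced_digits (k : ℕ) (c : ℤ) (L : ℕ) :
    ∃ d : ℕ → ℤ, (∀ ℓ, |d ℓ| ≤ k) ∧
      c ≡ ∑ ℓ ∈ range L, d ℓ * (2 * k + 1) ^ ℓ [ZMOD (2 * k + 1) ^ L] := by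
  induction L generalizing c with
  | zero => exact ⟨0, fun _ => by simp, Int.modEq_one⟩
  | succ L ih =>
    obtain ⟨r, q, hr, rfl⟩ := exists_balanced_residue k c
    obtain ⟨d, hd, hq⟩ := ih q
    refine ⟨fun ℓ => if ℓ = 0 then r else d (ℓ - 1), fun ℓ => ?_, ?_⟩
    · dsimp only
      split_ifs
      exacts [hr, hd _]
    · rw [sum_range_succ', pow_succ']
      have := (hq.mul_left' (c := 2 * k + 1)).add_left r
      simpa [mul_sum, mul_left_comm _ (d _), pow_succ', add_comm] using this

namespace Papillon

variable {k m : ℕ}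

theorem natCast_absN : (absN k m : ℤ) = m * (2 * k + 1) ^ m := by
  unfold absN; push_cast; ring

def residueGap (m a b : ℕ) : ℕ := (((b : ℤ) - a) % m).toNat

noncomputable def absDist (k m : ℕ) (s t : Fin (absN k m)) : ℕ :=
  sInf {L | HasWalkOfLength (absEdge k m) s t L}

theorem sum_residueGap (a : ℕ) :
    ∑ t : Fin (absN k m), residueGap m a t = (2 * k + 1) ^ m * ∑ r ∈ range m, r := by
  have hg : Function.Periodic (residueGap m a) m := fun t => by
    simp only [residueGap, Nat.cast_add, add_sub_right_comm, Int.add_emod_right]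
  rw [Fin.sum_univ_eq_sum_range (residueGap m a), absN, hg.sum_range_mul, smul_eq_mul,
    ← hg.sum_range_shift a]
  refine congrArg _ (sum_congr rfl fun r hr => ?_)
  simp [residueGap, Int.emod_eq_of_lt, mem_range.mp hr]

theorem two_mul_sum_residueGap_add_le (a : ℕ) :
    2 * ∑ t : Fin (absN k m), (residueGap m a t + m) ≤ 3 * m * absN k m := by
  have hgauss : (∑ r ∈ range m, r) * 2 ≤ m * m :=
    (sum_range_id_mul_two m).trans_le (Nat.mul_le_mul_left m (Nat.sub_le m 1))
  rw [sum_add_distrib, sum_residueGap, sum_const, card_univ, Fintype.card_fin, smul_eq_mul]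
  unfold absN
  nlinarith [Nat.mul_le_mul_left ((2 * k + 1) ^ m) hgauss]

variable [NeZero m]

instance : NeZero (absN k m) := ⟨mul_ne_zero (by positivity) (NeZero.ne m)⟩

def node (x : ℤ) : Fin (absN k m) :=
  ⟨(x % absN k m).toNat, by
    have hn : (0 : ℤ) < absN k m := by exact_mod_cast NeZero.pos _
    exact (Int.toNat_lt (Int.emod_nonneg x hn.ne')).mpr (Int.emod_lt_of_pos x hn)⟩

theorem natCast_val_node (x : ℤ) : (((node x : Fin (absN k m)) : ℕ) : ℤ) = x % absN k m :=
  Int.toNat_of_nonneg (Int.emod_nonneg x (by exact_mod_cast NeZero.ne _))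

theorem node_val_eq_self (u : Fin (absN k m)) : node (u : ℕ) = u :=
  Fin.ext (by simp [node, Int.emod_eq_of_lt, u.isLt])

theorem node_eq_node {x y : ℤ} (h : x ≡ y [ZMOD absN k m]) :
    (node x : Fin (absN k m)) = node y :=
  Fin.ext (congrArg Int.toNat h)

theorem absLevel_node {x : ℤ} {b : ℕ} (h : x ≡ b [ZMOD m]) :
    absLevel m (node x : Fin (absN k m)) = m - 1 - b % m := by
  have hdvd : (m : ℤ) ∣ absN k m := ⟨_, natCast_absN⟩
  have hval : ((node x : Fin (absN k m)) : ℕ) ≡ b [MOD m] := by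
    rw [← Int.natCast_modEq_iff, natCast_val_node]
    exact ((Int.mod_modEq x _).of_dvd hdvd).trans h
  rw [absLevel, hval]

theorem absEdge_node (x i : ℤ) (hi : |i| ≤ k) :
    absEdge k m (node x)
      (node (x + (1 + i * m * (2 * k + 1) ^ absLevel m (node x : Fin (absN k m))))) :=
  Or.inl ⟨i, (abs_le.mp hi).1, (abs_le.mp hi).2, by
    rw [natCast_val_node, natCast_val_node, Int.emod_add_emod]⟩

theorem hasWalkOfLength_forward (a : ℕ) (i : ℕ → ℤ) (hi : ∀ t, |i t| ≤ k) (j : ℕ) :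
    HasWalkOfLength (absEdge k m) (node a)
      (node (a + j + m * ∑ t ∈ range j, i t * (2 * k + 1) ^ (m - 1 - (a + t) % m))) j := by
  induction j with
  | zero => simpa using HasWalkOfLength.refl _ _
  | succ j ih =>
    set x : ℤ := a + j + m * ∑ t ∈ range j, i t * (2 * k + 1) ^ (m - 1 - (a + t) % m)
    have hx : x ≡ (a + j : ℕ) [ZMOD m] := by
      push_cast
      exact Int.modEq_add_fac_self
    have hstep := absEdge_node (k := k) (m := m) x (i j) (hi j)
    rw [absLevel_node hx] at hstep
    convert ih.trans (HasWalkOfLength.single hstep) using 2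
    rw [sum_range_succ]
    push_cast
    ring

theorem hasWalkOfLength_sweep (a : ℕ) (c : ℤ) :
    HasWalkOfLength (absEdge k m) (node a) (node (a + m + m * c)) m := by
  obtain ⟨d, hd, hc⟩ := exists_balanced_digits k c m
  set D : ℕ → ℤ := fun ℓ => d ℓ * (2 * k + 1) ^ ℓ
  have hD : Function.Periodic (fun t => D (m - 1 - t % m)) m := fun t => by
    simp only [Nat.add_mod_right]
  have hsum : ∑ t ∈ range m, D (m - 1 - (a + t) % m) = ∑ ℓ ∈ range m, D ℓ := by
    rw [hD.sum_range_shift a, ← sum_range_reflect D m]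
    exact sum_congr rfl fun t ht => by rw [Nat.mod_eq_of_lt (mem_range.mp ht)]
  have hwalk := hasWalkOfLength_forward (k := k) (m := m) a (fun t => d (m - 1 - (a + t) % m))
    (fun t => hd _) m
  rw [hsum] at hwalk
  convert hwalk using 1
  apply node_eq_node
  rw [natCast_absN]
  exact (hc.mul_left' (c := (m : ℤ))).add_left _

theorem hasWalkOfLength_route (s t : Fin (absN k m)) :
    HasWalkOfLength (absEdge k m) s t (residueGap m s t + m) := by
  set ρ := (((t : ℕ) - (s : ℕ) : ℤ) % m).toNat
  have hρ : (ρ : ℤ) = ((t : ℕ) - (s : ℕ) : ℤ) % m :=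
    Int.toNat_of_nonneg (Int.emod_nonneg _ (by exact_mod_cast NeZero.ne m))
  have h₁ : HasWalkOfLength (absEdge k m) s (node ((s : ℕ) + ρ : ℕ)) ρ := by
    simpa [node_val_eq_self] using hasWalkOfLength_forward (k := k) (m := m) s 0 (by simp) ρ
  have h₂ := hasWalkOfLength_sweep (k := k) (m := m) ((s : ℕ) + ρ)
    (((t : ℕ) - (s : ℕ)) / m - 1)
  have hend : (node (((s : ℕ) + ρ : ℕ) + m + m * (((t : ℕ) - (s : ℕ)) / m - 1)) :
      Fin (absN k m)) = t := by
    refine (congrArg node ?_).trans (node_val_eq_self t)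
    push_cast
    linear_combination hρ + Int.emod_add_mul_ediv ((t : ℕ) - (s : ℕ) : ℤ) m
  exact h₁.trans (hend ▸ h₂)

theorem two_mul_sum_absDist_le :
    2 * ∑ s : Fin (absN k m), ∑ t : Fin (absN k m), absDist k m s t ≤ 3 * m * absN k m ^ 2 :=
  calc 2 * ∑ s : Fin (absN k m), ∑ t : Fin (absN k m), absDist k m s t
      ≤ ∑ s : Fin (absN k m), 2 * ∑ t : Fin (absN k m),
          (residueGap m s t + m) := by
        rw [mul_sum]
        gcongr with s _ t _
        exact Nat.sInf_le (hasWalkOfLength_route s t)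
    _ ≤ ∑ _s : Fin (absN k m), 3 * m * absN k m :=
        sum_le_sum fun s _ => two_mul_sum_residueGap_add_le s
    _ = 3 * m * absN k m ^ 2 := by
      rw [sum_const, card_univ, Fintype.card_fin, smul_eq_mul]; ring

end Papillon

theorem absolute_average_shortest_path_general (k m : ℕ) (hm : 1 ≤ m) :
    (∑ s : Fin (absN k m), ∑ t : Fin (absN k m),
        ((sInf {L : ℕ | ∃ w : ℕ → Fin (absN k m),
          w 0 = s ∧ w L = t ∧ ∀ j < L, absEdge k m (w j) (w (j + 1))} : ℕ) : ℝ)) /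
      ((absN k m : ℕ) : ℝ) ^ 2 ≤ (3 / 2 : ℝ) * m := by
  have : NeZero m := ⟨by omega⟩
  change (∑ s, ∑ t, (Papillon.absDist k m s t : ℝ)) / _ ≤ _
  have hsum : (2 * ∑ s, ∑ t, Papillon.absDist k m s t : ℝ) ≤ 3 * m * absN k m ^ 2 := by
    exact_mod_cast Papillon.two_mul_sum_absDist_le
  push_cast at hsum
  have hn : (0 : ℝ) < absN k m := by exact_mod_cast NeZero.pos _
  rw [div_le_iff₀ (by positivity)]
  linarith

/-- In `B_absolute(k, m)`, the average over all ordered pairs `(s, t)` of the length of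
the shortest directed path from `s` to `t` is at most `1.5 m`. -/
theorem absolute_average_shortest_path (k m : ℕ) (hk : 1 ≤ k) (hm : 1 ≤ m) :
    (∑ s : Fin (absN k m), ∑ t : Fin (absN k m),
        ((sInf {L : ℕ | ∃ w : ℕ → Fin (absN k m),
          w 0 = s ∧ w L = t ∧ ∀ j < L, absEdge k m (w j) (w (j + 1))} : ℕ) : ℝ)) /
      ((absN k m : ℕ) : ℝ) ^ 2 ≤ (3 / 2 : ℝ) * m :=
  absolute_average_shortest_path_general k m hm
end
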